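/- With Z(x,t) = exp(−2x²/3 − 16t²/9)(1 + 5e^{4x} + 2e^{−√5 t + x} + 2e^{−√5 t + 5x} + 2e^{√5 t + x} + 2e^{√5 t + 5x} + 5e^{2x} + e^{6x}), r₁ = ∂²_x log Z, r₂ = ∂_x∂_t log Z, the Boussinesq equation holds: ∂r₂/∂t = −(1/3) ∂³r₁/∂x³ − 4 r₁ ∂r₁/∂x. -/

import Mathlib

/-!
Write `Z = exp (-2x²/3 - 16t²/9) · τ`. The Gaussian only shifts `r₁` by `-4/3`, and every
derivative of `log τ` is a polynomial in the ratios `q a b = ∂ₓᵃ ∂ₜᵇ τ / τ`, which obey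
`∂ₓ (q a b) = q (a + 1) b - q a b · q 1 0` and likewise in `t`. In these variables the Boussinesq
residual is exactly the `x`-derivative of `(D_t² + D_x⁴/3 - 16 D_x²/3)(τ · τ) / (2τ²)`, and this
Hirota bilinear expression vanishes identically for the given `τ`: a polynomial identity in `e^x`
and `e^{√5 t}`.
-/

open Real

theorem exp_ofNat_mul (n : ℕ) [n.AtLeastTwo] (x : ℝ) :
    exp (no_index (OfNat.ofNat n) * x) = exp x ^ (OfNat.ofNat n : ℕ) := by
  exact_mod_cast exp_nat_mul x n

noncomputable def expSum {ι : Type*} [Fintype ι] (c k ω : ι → ℝ) (x t : ℝ) : ℝ :=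
  ∑ i, c i * exp (k i * x + ω i * t)

section ExpSum

variable {ι : Type*} [Fintype ι] (c k ω : ι → ℝ) (x t : ℝ)

theorem hasDerivAt_expSum_left :
    HasDerivAt (fun y => expSum c k ω y t) (expSum (c * k) k ω x t) x := by
  refine (HasDerivAt.fun_sum fun i _ =>
    ((((hasDerivAt_id x).const_mul (k i)).add_const (ω i * t)).exp).const_mul (c i)).congr_deriv ?_
  simp only [expSum, Pi.mul_apply, id]
  exact Finset.sum_congr rfl fun i _ => by ring

theorem hasDerivAt_expSum_right :
    HasDerivAt (fun s => expSum c k ω x s) (expSum (c * ω) k ω x t) t := by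
  refine (HasDerivAt.fun_sum fun i _ =>
    ((((hasDerivAt_id t).const_mul (ω i)).const_add (k i * x)).exp).const_mul (c i)).congr_deriv ?_
  simp only [expSum, Pi.mul_apply, id]
  exact Finset.sum_congr rfl fun i _ => by ring

theorem expSum_pos [Nonempty ι] (hc : ∀ i, 0 < c i) : 0 < expSum c k ω x t :=
  Finset.sum_pos (fun i _ => mul_pos (hc i) (exp_pos _)) Finset.univ_nonempty

theorem expSum_smul_freq (a : ι → ℝ) (s : ℝ) (m : ι → ℝ) (b : ℕ) :
    expSum (a * (s • m) ^ b) k (s • m) x t = s ^ b * expSum (a * m ^ b) k (s • m) x t := by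
  simp only [expSum, Finset.mul_sum, Pi.mul_apply, Pi.pow_apply, Pi.smul_apply, smul_eq_mul]
  exact Finset.sum_congr rfl fun i _ => by ring

end ExpSum

structure IsPartialDerivFamily (F : ℕ → ℕ → ℝ → ℝ → ℝ) : Prop where
  hasDerivAt_left : ∀ a b x t, HasDerivAt (fun y => F a b y t) (F (a + 1) b x t) x
  hasDerivAt_right : ∀ a b x t, HasDerivAt (fun s => F a b x s) (F a (b + 1) x t) t

noncomputable def expSumDerivs {ι : Type*} [Fintype ι] (c k ω : ι → ℝ) (a b : ℕ) :
    ℝ → ℝ → ℝ :=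
  expSum (c * k ^ a * ω ^ b) k ω

theorem isPartialDerivFamily_expSumDerivs {ι : Type*} [Fintype ι] (c k ω : ι → ℝ) :
    IsPartialDerivFamily (expSumDerivs c k ω) where
  hasDerivAt_left a b x t := by
    unfold expSumDerivs
    convert hasDerivAt_expSum_left (c * k ^ a * ω ^ b) k ω x t using 2
    ring
  hasDerivAt_right a b x t := by
    unfold expSumDerivs
    convert hasDerivAt_expSum_right (c * k ^ a * ω ^ b) k ω x t using 2
    ring

noncomputable def relDeriv (F : ℕ → ℕ → ℝ → ℝ → ℝ) (a b : ℕ) (x t : ℝ) : ℝ :=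
  F a b x t / F 0 0 x t

noncomputable def boussinesqPotential (F : ℕ → ℕ → ℝ → ℝ → ℝ) (x t : ℝ) : ℝ :=
  -2 * x ^ 2 / 3 - 16 * t ^ 2 / 9 + log (F 0 0 x t)

/-- Hirota's `(D_t² + D_x⁴/3 - 16 D_x²/3)(F · F)`, divided by `2 F²`. -/
noncomputable def hirota (F : ℕ → ℕ → ℝ → ℝ → ℝ) (x t : ℝ) : ℝ :=
  relDeriv F 0 2 x t - relDeriv F 0 1 x t ^ 2
    + (relDeriv F 4 0 x t - 4 * relDeriv F 1 0 x t * relDeriv F 3 0 x t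
      + 3 * relDeriv F 2 0 x t ^ 2) / 3
    - 16 / 3 * (relDeriv F 2 0 x t - relDeriv F 1 0 x t ^ 2)

def SolvesBoussinesq (L : ℝ → ℝ → ℝ) : Prop :=
  let r₁ : ℝ → ℝ → ℝ := fun x t =>
    deriv (fun x' => deriv (fun x'' => L x'' t) x') x
  let r₂ : ℝ → ℝ → ℝ := fun x t =>
    deriv (fun x' => deriv (fun t' => L x' t') t) x
  ∀ x t : ℝ,
    deriv (fun t' => r₂ x t') t =
      -(1 / 3) * deriv (fun x' => deriv (fun x'' => deriv (fun y => r₁ y t) x'') x') x -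
        4 * r₁ x t * deriv (fun x' => r₁ x' t) x

namespace IsPartialDerivFamily

variable {F : ℕ → ℕ → ℝ → ℝ → ℝ}

local notation "q" => relDeriv F

theorem hasDerivAt_relDeriv_left (hF : IsPartialDerivFamily F) (h0 : ∀ x t, F 0 0 x t ≠ 0)
    (x t : ℝ) (a b : ℕ) :
    HasDerivAt (fun y => q a b y t) (q (a + 1) b x t - q a b x t * q 1 0 x t) x := by
  refine ((hF.hasDerivAt_left a b x t).div (hF.hasDerivAt_left 0 0 x t) (h0 x t)).congr_deriv ?_
  simp only [relDeriv]
  field_simp [h0 x t]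

theorem hasDerivAt_relDeriv_right (hF : IsPartialDerivFamily F) (h0 : ∀ x t, F 0 0 x t ≠ 0)
    (x t : ℝ) (a b : ℕ) :
    HasDerivAt (fun s => q a b x s) (q a (b + 1) x t - q a b x t * q 0 1 x t) t := by
  refine ((hF.hasDerivAt_right a b x t).div (hF.hasDerivAt_right 0 0 x t) (h0 x t)).congr_deriv ?_
  simp only [relDeriv]
  field_simp [h0 x t]

theorem hasDerivAt_boussinesqPotential_left (hF : IsPartialDerivFamily F)
    (h0 : ∀ x t, F 0 0 x t ≠ 0) (x t : ℝ) :
    HasDerivAt (fun y => boussinesqPotential F y t) (-4 * x / 3 + q 1 0 x t) x := by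
  refine ((((hasDerivAt_pow 2 x).const_mul (-2)).div_const 3).sub_const _).add
    ((hF.hasDerivAt_left 0 0 x t).log (h0 x t)) |>.congr_deriv ?_
  simp only [relDeriv]
  ring

theorem hasDerivAt_boussinesqPotential_right (hF : IsPartialDerivFamily F)
    (h0 : ∀ x t, F 0 0 x t ≠ 0) (x t : ℝ) :
    HasDerivAt (fun s => boussinesqPotential F x s) (-32 * t / 9 + q 0 1 x t) t := by
  refine (((hasDerivAt_pow 2 t).const_mul 16).div_const 9).const_sub _ |>.add
    ((hF.hasDerivAt_right 0 0 x t).log (h0 x t)) |>.congr_deriv ?_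
  simp only [relDeriv]
  ring

/- The `x`-derivatives of `log F` are the cumulants of the moments `q a 0`; the Gaussian of
`boussinesqPotential` only adds to the first two. -/
theorem hasDerivAt_cumulant1 (hF : IsPartialDerivFamily F) (h0 : ∀ x t, F 0 0 x t ≠ 0) (x t : ℝ) :
    HasDerivAt (fun y => -4 * y / 3 + q 1 0 y t) (-4 / 3 + (q 2 0 x t - q 1 0 x t ^ 2)) x := by
  have hq := hF.hasDerivAt_relDeriv_left h0 x t
  refine (((hasDerivAt_id x).const_mul (-4)).div_const 3).add (hq 1 0) |>.congr_deriv ?_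
  ring

theorem hasDerivAt_cumulant2 (hF : IsPartialDerivFamily F) (h0 : ∀ x t, F 0 0 x t ≠ 0) (x t : ℝ) :
    HasDerivAt (fun y => -4 / 3 + (q 2 0 y t - q 1 0 y t ^ 2))
      (q 3 0 x t - 3 * q 1 0 x t * q 2 0 x t + 2 * q 1 0 x t ^ 3) x := by
  have hq := hF.hasDerivAt_relDeriv_left h0 x t
  refine ((hq 2 0).sub ((hq 1 0).fun_pow 2)).const_add _ |>.congr_deriv ?_
  push_cast
  ring

theorem hasDerivAt_cumulant3 (hF : IsPartialDerivFamily F) (h0 : ∀ x t, F 0 0 x t ≠ 0) (x t : ℝ) :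
    HasDerivAt (fun y => q 3 0 y t - 3 * q 1 0 y t * q 2 0 y t + 2 * q 1 0 y t ^ 3)
      (q 4 0 x t - 4 * q 1 0 x t * q 3 0 x t - 3 * q 2 0 x t ^ 2
        + 12 * q 1 0 x t ^ 2 * q 2 0 x t - 6 * q 1 0 x t ^ 4) x := by
  have hq := hF.hasDerivAt_relDeriv_left h0 x t
  refine ((hq 3 0).sub (((hq 1 0).const_mul 3).mul (hq 2 0))).add
    (((hq 1 0).fun_pow 3).const_mul 2) |>.congr_deriv ?_
  push_cast
  ring

theorem hasDerivAt_cumulant4 (hF : IsPartialDerivFamily F) (h0 : ∀ x t, F 0 0 x t ≠ 0) (x t : ℝ) :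
    HasDerivAt (fun y => q 4 0 y t - 4 * q 1 0 y t * q 3 0 y t - 3 * q 2 0 y t ^ 2
        + 12 * q 1 0 y t ^ 2 * q 2 0 y t - 6 * q 1 0 y t ^ 4)
      (q 5 0 x t - 5 * q 1 0 x t * q 4 0 x t - 10 * q 2 0 x t * q 3 0 x t
        + 20 * q 1 0 x t ^ 2 * q 3 0 x t + 30 * q 1 0 x t * q 2 0 x t ^ 2
        - 60 * q 1 0 x t ^ 3 * q 2 0 x t + 24 * q 1 0 x t ^ 5) x := by
  have hq := hF.hasDerivAt_relDeriv_left h0 x t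
  refine ((((hq 4 0).sub (((hq 1 0).const_mul 4).mul (hq 3 0))).sub
    (((hq 2 0).fun_pow 2).const_mul 3)).add ((((hq 1 0).fun_pow 2).const_mul 12).mul (hq 2 0))).sub
    (((hq 1 0).fun_pow 4).const_mul 6) |>.congr_deriv ?_
  push_cast
  ring

theorem hasDerivAt_mixed_left (hF : IsPartialDerivFamily F) (h0 : ∀ x t, F 0 0 x t ≠ 0)
    (x t : ℝ) :
    HasDerivAt (fun y => -32 * t / 9 + q 0 1 y t) (q 1 1 x t - q 0 1 x t * q 1 0 x t) x :=
  (hF.hasDerivAt_relDeriv_left h0 x t 0 1).const_add _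

theorem hasDerivAt_mixed_right (hF : IsPartialDerivFamily F) (h0 : ∀ x t, F 0 0 x t ≠ 0)
    (x t : ℝ) :
    HasDerivAt (fun s => q 1 1 x s - q 0 1 x s * q 1 0 x s)
      (q 1 2 x t - 2 * q 0 1 x t * q 1 1 x t - q 1 0 x t * q 0 2 x t
        + 2 * q 0 1 x t ^ 2 * q 1 0 x t) t := by
  have hq := hF.hasDerivAt_relDeriv_right h0 x t
  refine ((hq 1 1).sub ((hq 0 1).mul (hq 1 0))).congr_deriv ?_
  ring

/- The derivative is the Boussinesq residual of `boussinesqPotential F`, written in the `q a b`. -/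
theorem hasDerivAt_hirota_left (hF : IsPartialDerivFamily F) (h0 : ∀ x t, F 0 0 x t ≠ 0)
    (x t : ℝ) :
    HasDerivAt (fun y => hirota F y t)
      ((q 1 2 x t - 2 * q 0 1 x t * q 1 1 x t - q 1 0 x t * q 0 2 x t
        + 2 * q 0 1 x t ^ 2 * q 1 0 x t)
      - (-(1 / 3) * (q 5 0 x t - 5 * q 1 0 x t * q 4 0 x t - 10 * q 2 0 x t * q 3 0 x t
        + 20 * q 1 0 x t ^ 2 * q 3 0 x t + 30 * q 1 0 x t * q 2 0 x t ^ 2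
        - 60 * q 1 0 x t ^ 3 * q 2 0 x t + 24 * q 1 0 x t ^ 5)
        - 4 * (-4 / 3 + (q 2 0 x t - q 1 0 x t ^ 2))
          * (q 3 0 x t - 3 * q 1 0 x t * q 2 0 x t + 2 * q 1 0 x t ^ 3))) x := by
  have hq := hF.hasDerivAt_relDeriv_left h0 x t
  refine ((((hq 0 2).sub ((hq 0 1).fun_pow 2)).add ((((hq 4 0).sub (((hq 1 0).const_mul 4).mul
    (hq 3 0))).add (((hq 2 0).fun_pow 2).const_mul 3)).div_const 3)).sub
    (((hq 2 0).sub ((hq 1 0).fun_pow 2)).const_mul (16 / 3))) |>.congr_deriv ?_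
  push_cast
  ring

theorem solvesBoussinesq_of_hirota_eq_zero (hF : IsPartialDerivFamily F)
    (h0 : ∀ x t, F 0 0 x t ≠ 0) (hB : ∀ x t, hirota F x t = 0) :
    SolvesBoussinesq (boussinesqPotential F) := by
  intro x t
  have dL x t := (hF.hasDerivAt_boussinesqPotential_left h0 x t).deriv
  have dLt x t := (hF.hasDerivAt_boussinesqPotential_right h0 x t).deriv
  have d1 x t := (hF.hasDerivAt_cumulant1 h0 x t).deriv
  have d2 x t := (hF.hasDerivAt_cumulant2 h0 x t).deriv
  have d3 x t := (hF.hasDerivAt_cumulant3 h0 x t).deriv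
  have d4 x t := (hF.hasDerivAt_cumulant4 h0 x t).deriv
  have dm x t := (hF.hasDerivAt_mixed_left h0 x t).deriv
  have dmt x t := (hF.hasDerivAt_mixed_right h0 x t).deriv
  have hres := (hF.hasDerivAt_hirota_left h0 x t).unique <| by
    simpa only [hB] using hasDerivAt_const x (0 : ℝ)
  simp only [dL, dLt, d1, d2, d3, d4, dm, dmt]
  linear_combination hres

end IsPartialDerivFamily

/-- `tau a b = ∂ₓᵃ ∂ₜᵇ τ` for the sum of exponentials `τ` in `Z`. -/
noncomputable abbrev tau : ℕ → ℕ → ℝ → ℝ → ℝ :=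
  expSumDerivs ![1, 5, 2, 2, 2, 2, 5, 1] ![0, 4, 1, 5, 1, 5, 2, 6]
    (√5 • ![0, 0, -1, -1, 1, 1, 0, 0])

theorem tau_pos (x t : ℝ) : 0 < tau 0 0 x t :=
  expSum_pos _ _ _ x t fun i => by fin_cases i <;> simp

theorem hirota_tau (x t : ℝ) : hirota tau x t = 0 := by
  have h0 := (tau_pos x t).ne'
  unfold hirota relDeriv
  simp only [tau, expSumDerivs, expSum_smul_freq, pow_zero] at h0 ⊢
  field_simp
  simp only [expSum, Fin.sum_univ_eight, Matrix.cons_val, Pi.mul_apply, Pi.pow_apply,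
    Pi.smul_apply, Pi.one_apply, smul_eq_mul, one_mul, zero_mul, mul_zero, mul_neg, neg_mul,
    mul_one, zero_add, add_zero, exp_zero, exp_add, exp_neg, exp_ofNat_mul, pow_one,
    sq_sqrt (show (0 : ℝ) ≤ 5 by norm_num)]
  field_simp
  ring

theorem tau_zero_zero (x t : ℝ) :
    tau 0 0 x t = 1 + 5 * exp (4 * x) + 2 * exp (-√5 * t + x) + 2 * exp (-√5 * t + 5 * x)
      + 2 * exp (√5 * t + x) + 2 * exp (√5 * t + 5 * x) + 5 * exp (2 * x) + exp (6 * x) := by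
  simp only [tau, expSumDerivs, expSum, Fin.sum_univ_eight, Matrix.cons_val, Pi.mul_apply,
    Pi.smul_apply, Pi.one_apply, smul_eq_mul, pow_zero, one_mul, zero_mul, mul_zero, mul_neg,
    neg_mul, mul_one, add_zero, exp_zero]
  ring_nf

/-- The explicit 3-soliton tau-function Z solves the Boussinesq equation in normal
coordinates: ∂r₂/∂t = −(1/3) ∂³r₁/∂x³ − 4 r₁ ∂r₁/∂x, where r₁ = ∂²_x log Z,
r₂ = ∂_x∂_t log Z. -/
theorem soliton_solves_boussinesq :
    let L : ℝ → ℝ → ℝ := fun x t =>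
      Real.log (Real.exp (-2 * x ^ 2 / 3 - 16 * t ^ 2 / 9) *
        (1 + 5 * Real.exp (4 * x) + 2 * Real.exp (-Real.sqrt 5 * t + x) +
          2 * Real.exp (-Real.sqrt 5 * t + 5 * x) + 2 * Real.exp (Real.sqrt 5 * t + x) +
          2 * Real.exp (Real.sqrt 5 * t + 5 * x) + 5 * Real.exp (2 * x) +
          Real.exp (6 * x)))
    let r₁ : ℝ → ℝ → ℝ := fun x t =>
      deriv (fun x' => deriv (fun x'' => L x'' t) x') x
    let r₂ : ℝ → ℝ → ℝ := fun x t =>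
      deriv (fun x' => deriv (fun t' => L x' t') t) x
    ∀ x t : ℝ,
      deriv (fun t' => r₂ x t') t =
        -(1 / 3) * deriv (fun x' => deriv (fun x'' => deriv (fun y => r₁ y t) x'') x') x -
          4 * r₁ x t * deriv (fun x' => r₁ x' t) x := by
  intro L
  have hL : L = boussinesqPotential tau := by
    funext x t
    simp only [L, boussinesqPotential, ← tau_zero_zero]
    rw [log_mul (exp_ne_zero _) (tau_pos x t).ne', log_exp]
  change SolvesBoussinesq L
  rw [hL]
  exact (isPartialDerivFamily_expSumDerivs _ _ _).solvesBoussinesq_of_hirota_eq_zero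
    (fun x t => (tau_pos x t).ne') hirota_tau
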